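/- arXiv:2511.14917 — 8 statements merged into one kernel-verified Lean document; each statement's English description precedes it below -/
import Mathlib

section
/- Let f : ℝⁿ × ℝ → ℝⁿ be continuously differentiable such that for all s, t the largest eigenvalue of the symmetric part of the Jacobian ∂_s f(s,t) is at most 1−μ for some μ>0. Let s* : ℝ → ℝⁿ satisfy s*(t) = f(s*(t), t) and ‖d/dt s*(t)‖ ≤ γ for all t, and let s : ℝ → ℝⁿ solve τ·s'(t) = −s(t) + f(s(t), t) with τ>0. Then limsup_{t→∞} ‖s(t) − s*(t)‖ ≤ γτ/μ. -/
open Filter Real Topology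

section Aux
variable {n : ℕ}

lemma mvt_inner
    (f : EuclideanSpace ℝ (Fin n) × ℝ → EuclideanSpace ℝ (Fin n))
    (hf : ContDiff ℝ 1 f) (μ : ℝ)
    (hJ : ∀ (p : EuclideanSpace ℝ (Fin n)) (t : ℝ) (v : EuclideanSpace ℝ (Fin n)),
      (inner ℝ v (fderiv ℝ (fun q => f (q, t)) p v) : ℝ) ≤ (1 - μ) * ‖v‖ ^ 2)
    (x y : EuclideanSpace ℝ (Fin n)) (t : ℝ) :
    (inner ℝ (x - y) (f (x, t) - f (y, t)) : ℝ) ≤ (1 - μ) * ‖x - y‖ ^ 2 := by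
  set v := x - y with hv
  have hg : Differentiable ℝ (fun q => f (q, t)) :=
    (hf.differentiable one_ne_zero).comp (differentiable_id.prodMk (differentiable_const t))
  set φ : ℝ → ℝ := fun θ => (inner ℝ v (f (y + θ • v, t)) : ℝ) with hφ
  have hderiv : ∀ θ : ℝ, HasDerivAt φ
      (inner ℝ v (fderiv ℝ (fun q => f (q, t)) (y + θ • v) v) : ℝ) θ := by
    intro θ
    have hc : HasDerivAt (fun θ : ℝ => y + θ • v) v θ := by
      simpa using ((hasDerivAt_id θ).smul_const v).const_add y
    have hgc : HasDerivAt (fun θ : ℝ => f (y + θ • v, t))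
        (fderiv ℝ (fun q => f (q, t)) (y + θ • v) v) θ :=
      by have := (hg (y + θ • v)).hasFDerivAt.comp_hasDerivAt θ hc; exact this
    simpa using (HasDerivAt.inner ℝ (hasDerivAt_const θ v) hgc)
  set ψ : ℝ → ℝ := fun θ => (1 - μ) * ‖v‖ ^ 2 * θ - φ θ with hψ
  have hψm : Monotone ψ := by
    apply monotone_of_deriv_nonneg
    · intro θ
      exact ((hasDerivAt_id θ).const_mul ((1 - μ) * ‖v‖ ^ 2)).sub (hderiv θ)
        |>.differentiableAt
    · intro θ
      have hd : HasDerivAt ψ ((1 - μ) * ‖v‖ ^ 2 * 1 -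
          (inner ℝ v (fderiv ℝ (fun q => f (q, t)) (y + θ • v) v) : ℝ)) θ :=
        (((hasDerivAt_id θ).const_mul ((1 - μ) * ‖v‖ ^ 2))).sub (hderiv θ)
      rw [hd.deriv]
      have := hJ (y + θ • v) t v
      linarith
  have h01 := hψm (zero_le_one)
  have h0 : φ 0 = (inner ℝ v (f (y, t)) : ℝ) := by simp [hφ]
  have h1 : φ 1 = (inner ℝ v (f (x, t)) : ℝ) := by simp [hφ, hv]
  simp only [hψ, mul_zero, mul_one, zero_sub] at h01
  rw [h0, h1] at h01
  rw [inner_sub_right]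
  linarith

end Aux

theorem leaky_tracking_bound {n : ℕ}
    (f : EuclideanSpace ℝ (Fin n) × ℝ → EuclideanSpace ℝ (Fin n))
    (hf : ContDiff ℝ 1 f)
    (μ γ τ : ℝ) (hμ : 0 < μ) (hτ : 0 < τ)
    -- the largest eigenvalue of the symmetric part of the Jacobian ∂_s f(s,t) is at most 1-μ,
    -- stated equivalently via the associated quadratic form
    (hJ : ∀ (p : EuclideanSpace ℝ (Fin n)) (t : ℝ) (v : EuclideanSpace ℝ (Fin n)),
      (inner ℝ v (fderiv ℝ (fun q => f (q, t)) p v) : ℝ) ≤ (1 - μ) * ‖v‖ ^ 2)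
    (sstar sstar' : ℝ → EuclideanSpace ℝ (Fin n))
    (hsstar : ∀ t, HasDerivAt sstar (sstar' t) t)
    (hfix : ∀ t, sstar t = f (sstar t, t))
    (hγ : ∀ t, ‖sstar' t‖ ≤ γ)
    (s s' : ℝ → EuclideanSpace ℝ (Fin n))
    (hs : ∀ t, HasDerivAt s (s' t) t)
    (hode : ∀ t, τ • s' t = -s t + f (s t, t)) :
    limsup (fun t => ‖s t - sstar t‖) atTop ≤ γ * τ / μ := by
  have hγ0 : 0 ≤ γ := le_trans (norm_nonneg _) (hγ 0)
  set E : ℝ → EuclideanSpace ℝ (Fin n) := fun t => s t - sstar t with hEdef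
  set E' : ℝ → EuclideanSpace ℝ (Fin n) := fun t => s' t - sstar' t with hE'def
  have heD : ∀ t, HasDerivAt E (E' t) t := fun t => (hs t).sub (hsstar t)
  -- key differential inequality on the inner product
  have hkey : ∀ t, τ * (inner ℝ (E t) (E' t) : ℝ) ≤ -μ * ‖E t‖ ^ 2 + τ * γ * ‖E t‖ := by
    intro t
    have hode' : τ • E' t = -(E t) + (f (s t, t) - f (sstar t, t)) - τ • sstar' t := by
      simp only [hEdef, hE'def, smul_sub]
      rw [hode t, ← hfix t]
      module
    have h2 : τ * (inner ℝ (E t) (E' t) : ℝ)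
        = -‖E t‖ ^ 2 + (inner ℝ (E t) (f (s t, t) - f (sstar t, t)) : ℝ)
          - τ * (inner ℝ (E t) (sstar' t) : ℝ) := by
      rw [← real_inner_smul_right, hode', inner_sub_right, inner_add_right,
        inner_neg_right, real_inner_self_eq_norm_sq, real_inner_smul_right]
    have h3 : (inner ℝ (E t) (f (s t, t) - f (sstar t, t)) : ℝ) ≤ (1 - μ) * ‖E t‖ ^ 2 :=
      mvt_inner f hf μ hJ (s t) (sstar t) t
    have h4 : -(‖E t‖ * γ) ≤ (inner ℝ (E t) (sstar' t) : ℝ) := by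
      have := abs_real_inner_le_norm (E t) (sstar' t)
      have h5 : ‖E t‖ * ‖sstar' t‖ ≤ ‖E t‖ * γ :=
        mul_le_mul_of_nonneg_left (hγ t) (norm_nonneg _)
      cases abs_le.mp this with
      | intro hl hr => linarith
    have h6 : τ * -(‖E t‖ * γ) ≤ τ * (inner ℝ (E t) (sstar' t) : ℝ) :=
      mul_le_mul_of_nonneg_left h4 hτ.le
    rw [h2]
    nlinarith [h3, h6]
  -- reduce to ∀ ε > 0
  refine le_of_forall_pos_le_add ?_
  intro ε₀ hε₀
  set δ : ℝ := ε₀ / 2 with hδdef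
  have hδ : 0 < δ := by positivity
  set W : ℝ → ℝ := fun t => Real.sqrt (‖E t‖ ^ 2 + δ ^ 2) with hWdef
  have hWsq : ∀ t, W t ^ 2 = ‖E t‖ ^ 2 + δ ^ 2 := by
    intro t
    exact Real.sq_sqrt (by positivity)
  have hWpos : ∀ t, 0 < W t := fun t => Real.sqrt_pos.mpr (by positivity)
  have hδW : ∀ t, δ ≤ W t := by
    intro t
    rw [hWdef]
    calc δ = Real.sqrt (δ ^ 2) := by rw [Real.sqrt_sq hδ.le]
    _ ≤ _ := Real.sqrt_le_sqrt (by nlinarith [sq_nonneg (‖E t‖)])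
  have hEW : ∀ t, ‖E t‖ ≤ W t := by
    intro t
    rw [hWdef]
    calc ‖E t‖ = Real.sqrt (‖E t‖ ^ 2) := by rw [Real.sqrt_sq (norm_nonneg _)]
    _ ≤ _ := Real.sqrt_le_sqrt (by nlinarith)
  -- derivative of W
  have hW : ∀ t, HasDerivAt W ((inner ℝ (E t) (E' t) : ℝ) / W t) t := by
    intro t
    have h0 := (HasDerivAt.inner ℝ (heD t) (heD t)).add_const (δ ^ 2)
    have hcomm : (inner ℝ (E t) (E' t) : ℝ) + (inner ℝ (E' t) (E t) : ℝ)
        = 2 * (inner ℝ (E t) (E' t) : ℝ) := by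
      rw [real_inner_comm (E' t)]; ring
    rw [hcomm] at h0
    have harg : (inner ℝ (E t) (E t) : ℝ) + δ ^ 2 ≠ 0 := by
      have : 0 < (inner ℝ (E t) (E t) : ℝ) + δ ^ 2 := by
        rw [real_inner_self_eq_norm_sq]; positivity
      exact this.ne'
    have hsqrt := (Real.hasDerivAt_sqrt harg).comp t h0
    have heq : W = fun u => Real.sqrt ((inner ℝ (E u) (E u) : ℝ) + δ ^ 2) := by
      funext u
      rw [hWdef]
      simp only [real_inner_self_eq_norm_sq]
    rw [heq]
    refine hsqrt.congr_deriv (Eq.symm ?_)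
    have hx : Real.sqrt ((inner ℝ (E t) (E t) : ℝ) + δ ^ 2) = W t := by
      rw [heq]
    have hgen : ∀ a x : ℝ, x ≠ 0 → a / x = 1 / (2 * x) * (2 * a) := by
      intro a x hxne; field_simp
    show (inner ℝ (E t) (E' t) : ℝ) / Real.sqrt ((inner ℝ (E t) (E t) : ℝ) + δ ^ 2) = _
    rw [hx]
    exact hgen _ _ (hWpos t).ne'
  set K : ℝ := -(μ / τ) with hKdef
  set ε : ℝ := γ + μ * δ / τ with hεdef
  have hK0 : K ≠ 0 := by
    rw [hKdef]
    have : μ / τ > 0 := by positivity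
    linarith
  have hKneg : K < 0 := by
    rw [hKdef]
    have : μ / τ > 0 := by positivity
    linarith
  have hbound : ∀ t, (inner ℝ (E t) (E' t) : ℝ) / W t ≤ K * W t + ε := by
    intro t
    rw [div_le_iff₀ (hWpos t)]
    rw [← mul_le_mul_iff_right₀ hτ]
    have hsimp : τ * ((K * W t + ε) * W t)
        = -μ * (W t) ^ 2 + γ * τ * (W t) + μ * δ * (W t) := by
      rw [hKdef, hεdef]; field_simp; ring
    rw [hsimp]
    have h1 := hkey t
    have h2 := hWsq t
    have h3 := hEW t
    have h4 := hδW t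
    nlinarith [mul_nonneg (mul_nonneg hγ0 hτ.le) (sub_nonneg.2 h3),
      mul_nonneg (mul_nonneg hμ.le hδ.le) (sub_nonneg.2 h4), norm_nonneg (E t)]
  -- Gronwall on [0, b]
  have hgron : ∀ t : ℝ, 0 ≤ t → W t ≤ gronwallBound (W 0) K ε t := by
    intro b hb
    have := le_gronwallBound_of_liminf_deriv_right_le (a := 0) (b := b)
      (f := W) (f' := fun t => (inner ℝ (E t) (E' t) : ℝ) / W t)
      (δ := W 0) (K := K) (ε := ε)
      (fun x _ => (hW x).continuousAt.continuousWithinAt)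
      (fun x _ r hr => by
        have ht : Tendsto (slope W x) (𝓝[>] x) (𝓝 ((inner ℝ (E x) (E' x) : ℝ) / W x)) :=
          ((hasDerivAt_iff_tendsto_slope.mp (hW x)).mono_left
            (nhdsWithin_mono x (fun z hz => ne_of_gt hz)))
        have hev : ∀ᶠ z in 𝓝[>] x, slope W x z < r := ht.eventually_lt_const hr
        refine hev.frequently.mono ?_
        intro z hz
        simpa [slope_def_field, div_eq_inv_mul] using hz)
      le_rfl
      (fun x _ => hbound x)
    simpa using this b ⟨hb, le_rfl⟩
  -- limit of the Gronwall bound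
  have hlim : Tendsto (fun x => gronwallBound (W 0) K ε x) atTop
      (𝓝 (γ * τ / μ + δ)) := by
    rw [gronwallBound_of_K_ne_0 hK0]
    have hexp : Tendsto (fun x : ℝ => Real.exp (K * x)) atTop (𝓝 0) := by
      apply Real.tendsto_exp_atBot.comp
      exact Tendsto.const_mul_atTop_of_neg hKneg tendsto_id
    have := (hexp.const_mul (W 0)).add ((hexp.sub_const 1).const_mul (ε / K))
    have hval : W 0 * 0 + ε / K * (0 - 1) = γ * τ / μ + δ := by
      have hμ' : μ ≠ 0 := hμ.ne'
      have hτ' : τ ≠ 0 := hτ.ne'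
      rw [hKdef, hεdef]
      field_simp
      ring_nf
    rw [hval] at this
    exact this
  -- conclude
  have hev2 : ∀ᶠ x in atTop, gronwallBound (W 0) K ε x < γ * τ / μ + δ + δ :=
    hlim.eventually_lt_const (by linarith)
  have hev : ∀ᶠ t in atTop, ‖s t - sstar t‖ ≤ γ * τ / μ + ε₀ := by
    filter_upwards [eventually_ge_atTop (0:ℝ), hev2] with t ht h2
    have : ‖E t‖ ≤ W t := hEW t
    have h3 := hgron t ht
    have : ‖s t - sstar t‖ ≤ γ * τ / μ + δ + δ := by
      calc ‖s t - sstar t‖ = ‖E t‖ := rfl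
      _ ≤ W t := hEW t
      _ ≤ gronwallBound (W 0) K ε t := h3
      _ ≤ _ := h2.le
    calc ‖s t - sstar t‖ ≤ γ * τ / μ + δ + δ := this
    _ = γ * τ / μ + ε₀ := by rw [hδdef]; ring
  exact limsup_le_of_le (u := fun t => ‖s t - sstar t‖)
    (isCoboundedUnder_le_of_le atTop (fun t => norm_nonneg _)) hev
end

section
/- For the scalar dynamics s'(t) = −s(t)/2 + t (i.e., f(s,t) = s/2 + t, τ = 1, μ = 1/2), the target trajectory satisfying s*(t) = f(s*(t), t) is s*(t) = 2t, the solution with initial condition s(0) = s₀ is s(t) = (s₀ + 4)·exp(−t/2) + 2t − 4, and |s(t) − s*(t)| → 4 as t → ∞. Hence the tracking bound γτ/μ = 4 is attained. -/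
open Filter Real

theorem scalar_example_bound_tight (s₀ : ℝ) :
    -- s*(t) = 2t is the target trajectory: s*(t) = f(s*(t), t) with f(s,t) = s/2 + t
    (∀ t : ℝ, 2 * t = (2 * t) / 2 + t) ∧
    -- s(t) = (s₀+4)·exp(-t/2) + 2t - 4 solves s' = -s/2 + t, i.e. s' = f(s,t) - s … with τ = 1
    (∀ t : ℝ, HasDerivAt (fun t => (s₀ + 4) * Real.exp (-t / 2) + 2 * t - 4)
        (-((s₀ + 4) * Real.exp (-t / 2) + 2 * t - 4) / 2 + t) t) ∧
    -- initial condition s(0) = s₀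
    ((s₀ + 4) * Real.exp (-(0:ℝ) / 2) + 2 * 0 - 4 = s₀) ∧
    -- the tracking error tends to 4 = γτ/μ
    Tendsto (fun t : ℝ => |((s₀ + 4) * Real.exp (-t / 2) + 2 * t - 4) - 2 * t|)
      atTop (nhds 4) := by
  refine ⟨fun t => by ring, fun t => ?_, by simp, ?_⟩
  · have h1 : HasDerivAt (fun t : ℝ => -t / 2) (-1 / 2) t := by
      simpa using ((hasDerivAt_id t).neg.div_const 2)
    have h2 : HasDerivAt (fun t : ℝ => (s₀ + 4) * Real.exp (-t / 2) + 2 * t - 4)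
        ((s₀ + 4) * (Real.exp (-t / 2) * (-1 / 2)) + 2 * 1) t := by
      exact (((h1.exp.const_mul (s₀ + 4)).add ((hasDerivAt_id t).const_mul 2)).sub_const 4)
    convert h2 using 1
    ring
  · have hin : Tendsto (fun t : ℝ => ((s₀ + 4) * Real.exp (-t / 2) + 2 * t - 4) - 2 * t)
        atTop (nhds (-4)) := by
      have he : Tendsto (fun t : ℝ => Real.exp (-t / 2)) atTop (nhds 0) :=
        Real.tendsto_exp_atBot.comp
          ((tendsto_neg_atBot_iff.mpr tendsto_id).atBot_div_const (by norm_num : (0:ℝ) < 2))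
      have h2 := (he.const_mul (s₀ + 4)).sub_const 4
      rw [mul_zero, zero_sub] at h2
      apply h2.congr
      intro t; ring
    have := hin.abs
    simpa using this
end

section
/- Let f : ℝⁿ × ℝ → ℝⁿ and let s : ℝ → ℝⁿ be differentiable such that t ↦ f(s(t), t) is differentiable and τ·s'(t) = −s(t) + f(s(t), t) + τ·(d/dt)[f(s(t), t)] for all t ≥ 0 with τ > 0. Then for all t ≥ 0, ‖s(t) − f(s(t), t)‖ = ‖s(0) − f(s(0), 0)‖ · exp(−t/τ). -/
open Filter Real

theorem prospective_residual_decay {n : ℕ} (τ : ℝ) (hτ : 0 < τ)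
    (f : EuclideanSpace ℝ (Fin n) × ℝ → EuclideanSpace ℝ (Fin n))
    (s s' g' : ℝ → EuclideanSpace ℝ (Fin n))
    (hs : ∀ t, HasDerivAt s (s' t) t)
    (hg : ∀ t, HasDerivAt (fun r => f (s r, r)) (g' t) t)
    (hode : ∀ t, 0 ≤ t → τ • s' t = -s t + f (s t, t) + τ • g' t) :
    ∀ t, 0 ≤ t → ‖s t - f (s t, t)‖ = ‖s 0 - f (s 0, 0)‖ * Real.exp (-t / τ) := by
  intro t ht
  have hτ0 : τ ≠ 0 := ne_of_gt hτ
  set e : ℝ → EuclideanSpace ℝ (Fin n) := fun r => s r - f (s r, r) with he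
  have hecont : Continuous e := by
    rw [continuous_iff_continuousAt]
    intro r
    exact ((hs r).continuousAt).sub ((hg r).continuousAt)
  have he' : ∀ r, 0 ≤ r → HasDerivAt e (-(τ⁻¹ • e r)) r := by
    intro r hr
    have h := (hs r).sub (hg r)
    have heq : s' r - g' r = -(τ⁻¹ • e r) := by
      have h1 : τ • (s' r - g' r) = -(e r) := by
        have := hode r hr
        simp only [he, smul_sub]
        rw [this]; abel
      have := congrArg (fun x => τ⁻¹ • x) h1
      simpa [smul_smul, inv_mul_cancel₀ hτ0] using this
    rw [← heq]; exact h
  set u : ℝ → EuclideanSpace ℝ (Fin n) := fun r => Real.exp (r / τ) • e r with hu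
  have hu' : ∀ r ∈ Set.Ico 0 t, HasDerivWithinAt u 0 (Set.Ici r) r := by
    intro r hr
    have hexp : HasDerivAt (fun x : ℝ => Real.exp (x / τ))
        (Real.exp (r / τ) * τ⁻¹) r := by
      simpa [Function.comp_def] using ((Real.hasDerivAt_exp (r / τ)).comp r
        ((hasDerivAt_id r).div_const τ))
    have hd := hexp.smul (he' r hr.1)
    have h0 : Real.exp (r / τ) • -(τ⁻¹ • e r) +
        (Real.exp (r / τ) * τ⁻¹) • e r = 0 := by
      rw [smul_neg, smul_smul, mul_comm (Real.exp (r/τ)) τ⁻¹,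
        mul_comm τ⁻¹ (Real.exp (r/τ))]
      abel
    rw [h0] at hd
    exact hd.hasDerivWithinAt
  have hcont : ContinuousOn u (Set.Icc 0 t) :=
    ((Real.continuous_exp.comp (continuous_id.div_const τ)).smul hecont).continuousOn
  have hconst := constant_of_has_deriv_right_zero hcont hu' t (Set.right_mem_Icc.mpr ht)
  have hu0 : u 0 = e 0 := by simp [hu]
  have hkey : Real.exp (t / τ) • e t = e 0 := by
    rw [← hu0]; exact hconst
  have het : e t = Real.exp (-t / τ) • e 0 := by
    rw [← hkey, smul_smul, ← Real.exp_add]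
    rw [neg_div, neg_add_cancel, Real.exp_zero, one_smul]
  calc ‖e t‖ = ‖Real.exp (-t / τ) • e 0‖ := by rw [het]
    _ = ‖e 0‖ * Real.exp (-t / τ) := by
        rw [norm_smul, Real.norm_eq_abs, abs_of_pos (Real.exp_pos _), mul_comm]
end

section
/- Let s follow the prospective dynamics τ·s'(t) = −s(t) + f(s(t), t) + τ·(d/dt)[f(s(t), t)] with τ > 0. Then the residual e(t) = s(t) − f(s(t), t) converges to 0 as t → ∞. -/
open Filter Real

theorem prospective_residual_tendsto_zero {n : ℕ} (τ : ℝ) (hτ : 0 < τ)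
    (f : EuclideanSpace ℝ (Fin n) × ℝ → EuclideanSpace ℝ (Fin n))
    (s s' g' : ℝ → EuclideanSpace ℝ (Fin n))
    (hs : ∀ t, HasDerivAt s (s' t) t)
    (hg : ∀ t, HasDerivAt (fun r => f (s r, r)) (g' t) t)
    (hode : ∀ t, τ • s' t = -s t + f (s t, t) + τ • g' t) :
    Tendsto (fun t => s t - f (s t, t)) atTop (nhds 0) := by
  set e : ℝ → EuclideanSpace ℝ (Fin n) := fun t => s t - f (s t, t) with he
  have hτ' : τ ≠ 0 := ne_of_gt hτ
  have hde : ∀ t, HasDerivAt e (-(1/τ) • e t) t := by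
    intro t
    have h1 : HasDerivAt e (s' t - g' t) t := (hs t).sub (hg t)
    have h2 : s' t - g' t = -(1/τ) • e t := by
      have := hode t
      have h3 : τ • (s' t - g' t) = -(s t - f (s t, t)) := by
        rw [smul_sub]
        rw [this]
        abel
      have h4 : s' t - g' t = τ⁻¹ • (-(s t - f (s t, t))) := by
        rw [← h3, smul_smul, inv_mul_cancel₀ hτ', one_smul]
      rw [h4, he, one_div]
      module
    rwa [h2] at h1
  -- h t := exp(t/τ) • e t has zero derivative, hence constant
  set h : ℝ → EuclideanSpace ℝ (Fin n) := fun t => Real.exp (t / τ) • e t with hh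
  have hdh : ∀ t, HasDerivAt h 0 t := by
    intro t
    have hc : HasDerivAt (fun t : ℝ => Real.exp (t / τ)) (Real.exp (t / τ) * (1 / τ)) t := by
      have : HasDerivAt (fun t : ℝ => t / τ) (1 / τ) t := by
        simpa using (hasDerivAt_id t).div_const τ
      exact (Real.hasDerivAt_exp (t / τ)).comp t this
    have hd := hc.smul (hde t)
    have hz : Real.exp (t / τ) • -(1 / τ) • e t + (Real.exp (t / τ) * (1 / τ)) • e t = 0 := by
      rw [smul_smul, ← add_smul]
      ring_nf
      simp
    rw [hz] at hd
    exact hd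
  have hconst : ∀ t, h t = h 0 := by
    intro t
    have : ∀ x, deriv h x = 0 := fun x => (hdh x).deriv
    have hdiff : Differentiable ℝ h := fun x => (hdh x).differentiableAt
    exact is_const_of_deriv_eq_zero hdiff this t 0
  have hee : ∀ t, e t = Real.exp (-(t / τ)) • h 0 := by
    intro t
    rw [← hconst t, hh]
    simp only [smul_smul, ← Real.exp_add]
    simp
  have : Tendsto (fun t : ℝ => Real.exp (-(t / τ)) • h 0) atTop (nhds 0) := by
    have h1 : Tendsto (fun t : ℝ => Real.exp (-(t / τ))) atTop (nhds 0) := by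
      apply Real.tendsto_exp_atBot.comp
      apply tendsto_neg_atTop_atBot.comp
      exact tendsto_id.atTop_div_const hτ
    simpa using h1.smul_const (h 0)
  exact this.congr (fun t => (hee t).symm)
end

section
/- Suppose J : ℝ → Matrix n n ℝ is such that for each t the symmetric part (J(t)+J(t)ᵀ)/2 has all eigenvalues at most −μ with μ > 0. Let x : ℝ → ℝⁿ be differentiable with x'(t) = J(t)·x(t) + b(t) where ‖b(t)‖ ≤ γ. Then V(t) = ½‖x(t)‖² satisfies V'(t) ≤ −2μ·V(t) + γ·√(2·V(t)) for all t. -/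
open Filter Real Matrix

/-- Multiplication of a Euclidean vector by a matrix. -/
noncomputable def mulVecE {n : ℕ} (A : Matrix (Fin n) (Fin n) ℝ)
    (x : EuclideanSpace ℝ (Fin n)) : EuclideanSpace ℝ (Fin n) :=
  (EuclideanSpace.equiv (Fin n) ℝ).symm (A.mulVec (EuclideanSpace.equiv (Fin n) ℝ x))

/-- Quadratic form bound for a Hermitian real matrix with eigenvalues ≤ -μ. -/
lemma herm_quad_bound {n : ℕ} {A : Matrix (Fin n) (Fin n) ℝ} (hA : A.IsHermitian)
    {μ : ℝ} (h : ∀ i, hA.eigenvalues i ≤ -μ) (y : EuclideanSpace ℝ (Fin n)) :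
    (inner ℝ (mulVecE A y) y : ℝ) ≤ -μ * ‖y‖ ^ 2 := by
  have hT : (Matrix.toEuclideanLin A).IsSymmetric :=
    (Matrix.isHermitian_iff_isSymmetric).1 hA
  set e := hA.eigenvectorBasis with he
  have key : (inner ℝ (mulVecE A y) y : ℝ)
      = ∑ i, hA.eigenvalues i * (inner ℝ (e i) y : ℝ) ^ 2 := by
    have h1 : (inner ℝ (mulVecE A y) y : ℝ)
        = ∑ i, (inner ℝ (mulVecE A y) (e i) : ℝ) * (inner ℝ (e i) y : ℝ) :=
      (e.sum_inner_mul_inner (mulVecE A y) y).symm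
    rw [h1]
    refine Finset.sum_congr rfl fun i _ => ?_
    have h2 : (inner ℝ (mulVecE A y) (e i) : ℝ) = inner ℝ y (mulVecE A (e i)) := by
      have := hT y (e i)
      exact this
    have h3 : mulVecE A (e i) = hA.eigenvalues i • (e i) := by
      apply (EuclideanSpace.equiv (Fin n) ℝ).injective
      ext j
      have := congrFun (hA.mulVec_eigenvectorBasis i) j
      simp [mulVecE, he]
      exact this
    rw [h2, h3, real_inner_smul_right, real_inner_comm y (e i)]
    ring
  rw [key]
  have parseval : ∑ i, (inner ℝ (e i) y : ℝ) ^ 2 = ‖y‖ ^ 2 := by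
    have := e.sum_inner_mul_inner y y
    simp only [real_inner_self_eq_norm_sq] at this
    calc ∑ i, (inner ℝ (e i) y : ℝ) ^ 2
        = ∑ i, (inner ℝ y (e i) : ℝ) * (inner ℝ (e i) y : ℝ) := by
          refine Finset.sum_congr rfl fun i _ => ?_
          rw [real_inner_comm y (e i)]; ring
      _ = ‖y‖ ^ 2 := this
  calc ∑ i, hA.eigenvalues i * (inner ℝ (e i) y : ℝ) ^ 2
      ≤ ∑ i, -μ * (inner ℝ (e i) y : ℝ) ^ 2 := by
        refine Finset.sum_le_sum fun i _ => ?_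
        exact mul_le_mul_of_nonneg_right (h i) (sq_nonneg _)
    _ = -μ * ‖y‖ ^ 2 := by rw [← Finset.mul_sum, parseval]

theorem lyapunov_differential_inequality {n : ℕ}
    (J : ℝ → Matrix (Fin n) (Fin n) ℝ) (μ γ : ℝ) (hμ : 0 < μ)
    -- all eigenvalues of the symmetric part of J(t) are at most -μ
    (hsym : ∀ t, ((1 / 2 : ℝ) • (J t + (J t)ᵀ)).IsHermitian)
    (heig : ∀ t i, (hsym t).eigenvalues i ≤ -μ)
    (b : ℝ → EuclideanSpace ℝ (Fin n)) (hb : ∀ t, ‖b t‖ ≤ γ)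
    (x x' : ℝ → EuclideanSpace ℝ (Fin n))
    (hx : ∀ t, HasDerivAt x (x' t) t)
    (hode : ∀ t, x' t = mulVecE (J t) (x t) + b t) :
    ∀ t, deriv (fun r => (1 / 2 : ℝ) * ‖x r‖ ^ 2) t
      ≤ -2 * μ * ((1 / 2) * ‖x t‖ ^ 2) + γ * Real.sqrt (2 * ((1 / 2) * ‖x t‖ ^ 2)) := by
  intro t
  -- derivative of V
  have hV : HasDerivAt (fun r => (1 / 2 : ℝ) * ‖x r‖ ^ 2) (inner ℝ (x' t) (x t) : ℝ) t := by
    have h1 : HasDerivAt (fun r => (inner ℝ (x r) (x r) : ℝ))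
        ((inner ℝ (x t) (x' t) : ℝ) + inner ℝ (x' t) (x t)) t := (hx t).inner ℝ (hx t)
    have h2 : HasDerivAt (fun r => (1 / 2 : ℝ) * (inner ℝ (x r) (x r) : ℝ))
        ((1 / 2 : ℝ) * ((inner ℝ (x t) (x' t) : ℝ) + inner ℝ (x' t) (x t))) t :=
      h1.const_mul _
    have h3 : (1 / 2 : ℝ) * ((inner ℝ (x t) (x' t) : ℝ) + inner ℝ (x' t) (x t))
        = inner ℝ (x' t) (x t) := by
      rw [real_inner_comm (x t) (x' t)]; ring
    rw [h3] at h2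
    convert h2 using 2 with r
    · rw [real_inner_self_eq_norm_sq]
  rw [hV.deriv]
  -- reduce quadratic form of J to its symmetric part
  have hsplit : (inner ℝ (mulVecE (J t) (x t)) (x t) : ℝ)
      = inner ℝ (mulVecE ((1 / 2 : ℝ) • (J t + (J t)ᵀ)) (x t)) (x t) := by
    set y : Fin n → ℝ := (EuclideanSpace.equiv (Fin n) ℝ) (x t) with hy
    have hinner : ∀ M : Matrix (Fin n) (Fin n) ℝ,
        (inner ℝ (mulVecE M (x t)) (x t) : ℝ) = (M.mulVec y) ⬝ᵥ y := by
      intro M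
      simp only [mulVecE, EuclideanSpace.inner_eq_star_dotProduct, dotProduct,
        mul_comm]
      rfl
    rw [hinner, hinner]
    have htr : ((J t)ᵀ.mulVec y) ⬝ᵥ y = ((J t).mulVec y) ⬝ᵥ y := by
      rw [Matrix.mulVec_transpose, ← Matrix.dotProduct_mulVec, dotProduct_comm]
    simp only [Matrix.smul_mulVec, Matrix.add_mulVec, smul_dotProduct,
      add_dotProduct, htr, smul_eq_mul]
    ring
  -- quadratic form bound
  have hquad : (inner ℝ (mulVecE (J t) (x t)) (x t) : ℝ) ≤ -μ * ‖x t‖ ^ 2 := by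
    rw [hsplit]
    exact herm_quad_bound (hsym t) (heig t) (x t)
  -- Cauchy–Schwarz for the b term
  have hγ0 : 0 ≤ γ := le_trans (norm_nonneg _) (hb t)
  have hcs : (inner ℝ (b t) (x t) : ℝ) ≤ γ * ‖x t‖ := by
    calc (inner ℝ (b t) (x t) : ℝ) ≤ ‖b t‖ * ‖x t‖ := real_inner_le_norm _ _
      _ ≤ γ * ‖x t‖ := mul_le_mul_of_nonneg_right (hb t) (norm_nonneg _)
  have hsum : (inner ℝ (x' t) (x t) : ℝ)
      = inner ℝ (mulVecE (J t) (x t)) (x t) + inner ℝ (b t) (x t) := by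
    rw [hode t, inner_add_left]
  have hrhs : -2 * μ * ((1 / 2 : ℝ) * ‖x t‖ ^ 2)
      + γ * Real.sqrt (2 * ((1 / 2) * ‖x t‖ ^ 2)) = -μ * ‖x t‖ ^ 2 + γ * ‖x t‖ := by
    have : Real.sqrt (2 * ((1 / 2 : ℝ) * ‖x t‖ ^ 2)) = ‖x t‖ := by
      rw [show (2 : ℝ) * ((1 / 2) * ‖x t‖ ^ 2) = ‖x t‖ ^ 2 by ring]
      exact Real.sqrt_sq (norm_nonneg _)
    rw [this]; ring
  rw [hsum, hrhs]
  exact add_le_add hquad hcs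
end

section
/- Let V : ℝ → ℝ be nonnegative and differentiable, satisfying V'(t) ≤ −2a·V(t) + b·√(2·V(t)) for all t ≥ 0 with a, b > 0. Then limsup_{t→∞} V(t) ≤ b²/(2a²). -/
open Filter Real

theorem lyapunov_limsup_bound (V V' : ℝ → ℝ) (a b : ℝ) (ha : 0 < a) (hb : 0 < b)
    (hnn : ∀ t, 0 ≤ V t)
    (hV : ∀ t, HasDerivAt V (V' t) t)
    (hineq : ∀ t, 0 ≤ t → V' t ≤ -2 * a * V t + b * Real.sqrt (2 * V t)) :
    limsup V atTop ≤ b ^ 2 / (2 * a ^ 2) := by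
  set B : ℝ := b ^ 2 / (2 * a ^ 2) with hB
  have hcobdd : IsCoboundedUnder (· ≤ ·) atTop V :=
    isCoboundedUnder_le_of_le atTop hnn
  -- it suffices to show limsup ≤ B + ε for all ε > 0
  refine le_of_forall_pos_le_add fun ε hε => ?_
  set c : ℝ := B + ε with hc
  have hBpos : 0 < B := by positivity
  have hcpos : 0 < c := by positivity
  set u0 : ℝ := Real.sqrt (2 * c) with hu0
  have hu0pos : 0 < u0 := Real.sqrt_pos.2 (by linarith)
  have hu0sq : u0 ^ 2 = 2 * c := Real.sq_sqrt (by linarith)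
  have h2c : 2 * a ^ 2 * c = b ^ 2 + 2 * a ^ 2 * ε := by
    rw [hc, hB]; field_simp
  have hau0 : b < a * u0 := by
    nlinarith [hu0sq, mul_pos ha hu0pos, mul_pos (mul_pos ha ha) hε]
  set δ : ℝ := u0 * (a * u0 - b) with hδ
  have hδpos : 0 < δ := mul_pos hu0pos (by linarith)
  -- Claim A : if V t ≥ c and t ≥ 0 then V' t ≤ -δ
  have claimA : ∀ t, 0 ≤ t → c ≤ V t → V' t ≤ -δ := by
    intro t ht hVt
    set u : ℝ := Real.sqrt (2 * V t) with hu
    have husq : u ^ 2 = 2 * V t := Real.sq_sqrt (by linarith [hnn t])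
    have huu0 : u0 ≤ u := Real.sqrt_le_sqrt (by linarith)
    have h1 : V' t ≤ -2 * a * V t + b * u := hineq t ht
    nlinarith [husq, hu0sq, mul_le_mul_of_nonneg_left huu0 (le_of_lt ha)]
  -- Claim B : decay lemma
  have claimB : ∀ p q : ℝ, p ≤ q → (∀ t ∈ Set.Ioo p q, V' t ≤ -δ) →
      V q ≤ V p - δ * (q - p) := by
    intro p q hpq hd
    have hg : ∀ t, HasDerivAt (fun s => V s + δ * s) (V' t + δ) t := by
      intro t
      have h := (hV t).add ((hasDerivAt_id t).const_mul δ)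
      rw [mul_one] at h
      exact h
    have hanti : AntitoneOn (fun s => V s + δ * s) (Set.Icc p q) := by
      apply antitoneOn_of_deriv_nonpos (convex_Icc p q)
      · exact fun t _ => ((hg t).continuousAt).continuousWithinAt
      · exact fun t ht => ((hg t).differentiableAt).differentiableWithinAt
      · intro t ht
        rw [interior_Icc] at ht
        rw [(hg t).deriv]
        linarith [hd t ht]
    have := hanti (Set.left_mem_Icc.2 hpq) (Set.right_mem_Icc.2 hpq) hpq
    simp only at this
    linarith
  -- Claim C : there is t0 ≥ 0 with V t0 ≤ c
  have claimC : ∃ t0, 0 ≤ t0 ∧ V t0 ≤ c := by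
    by_contra h
    push_neg at h
    set T : ℝ := V 0 / δ + 1 with hT
    have hT0 : 0 ≤ T := by have := hnn 0; positivity
    have hdec : V T ≤ V 0 - δ * (T - 0) := by
      apply claimB 0 T hT0
      intro t ht
      exact claimA t (le_of_lt ht.1) (le_of_lt (h t (le_of_lt ht.1)))
    have : δ * T = V 0 + δ := by
      rw [hT, mul_add, mul_one, mul_div_assoc', mul_div_cancel_left₀ _ hδpos.ne']
    have := hnn T
    nlinarith
  obtain ⟨t0, ht0, hVt0⟩ := claimC
  -- Claim D : V t ≤ c for all t ≥ t0
  have claimD : ∀ t, t0 ≤ t → V t ≤ c := by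
    intro t1 ht1
    by_contra hgt
    push_neg at hgt
    have ht1' : t0 < t1 := lt_of_le_of_ne ht1 (by rintro rfl; linarith)
    set S : Set ℝ := {u | u ∈ Set.Icc t0 t1 ∧ V u ≤ c} with hS
    have hSne : S.Nonempty := ⟨t0, ⟨Set.left_mem_Icc.2 ht1, hVt0⟩⟩
    have hSbdd : BddAbove S := ⟨t1, fun u hu => hu.1.2⟩
    have hSclosed : IsClosed S := by
      have : S = Set.Icc t0 t1 ∩ V ⁻¹' Set.Iic c := by
        ext u; simp [hS, Set.mem_Iic, and_assoc]
      rw [this]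
      exact isClosed_Icc.inter (IsClosed.preimage
        (continuous_iff_continuousAt.2 fun t => (hV t).continuousAt) isClosed_Iic)
    set s : ℝ := sSup S with hs
    have hsS : s ∈ S := hSclosed.csSup_mem hSne hSbdd
    have hsVc : V s ≤ c := hsS.2
    have hst1 : s < t1 := lt_of_le_of_ne hsS.1.2 fun h => absurd hgt (not_lt.2 (h ▸ hsVc))
    have hdec : V t1 ≤ V s - δ * (t1 - s) := by
      apply claimB s t1 (le_of_lt hst1)
      intro u hu
      have huc : c < V u := by
        by_contra hle
        push_neg at hle
        have : u ∈ S := ⟨⟨le_trans hsS.1.1 (le_of_lt hu.1), le_of_lt hu.2⟩, hle⟩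
        exact absurd (le_csSup hSbdd this) (not_le.2 hu.1)
      exact claimA u (le_trans ht0 (le_trans hsS.1.1 (le_of_lt hu.1))) (le_of_lt huc)
    nlinarith [mul_pos hδpos (sub_pos.2 hst1)]
  have hev : ∀ᶠ t in atTop, V t ≤ c := eventually_atTop.2 ⟨t0, claimD⟩
  exact limsup_le_of_le hcobdd hev
end

section
/- Suppose s : ℝ → ℝⁿ is differentiable, F(s, t) := f(s, t) is continuously differentiable, and Id − ∂_s f(s(t), t) is invertible along the trajectory. Then s satisfies the prospective dynamics τ·s'(t) = −s(t) + f(s(t), t) + τ·(d/dt)[f(s(t), t)] if and only if it satisfies the prediction-correction dynamics τ·s'(t) = (Id − ∂_s f(s(t), t))⁻¹·(−s(t) + f(s(t), t) + τ·∂_t f(s(t), t)). -/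
open Filter Real

theorem prospective_iff_prediction_correction {n : ℕ} (τ : ℝ) (hτ : 0 < τ)
    (f : EuclideanSpace ℝ (Fin n) × ℝ → EuclideanSpace ℝ (Fin n)) (hf : ContDiff ℝ 1 f)
    (s s' : ℝ → EuclideanSpace ℝ (Fin n)) (hs : ∀ t, HasDerivAt s (s' t) t)
    (B : ℝ → (EuclideanSpace ℝ (Fin n) ≃L[ℝ] EuclideanSpace ℝ (Fin n)))
    (hB : ∀ t, (B t : EuclideanSpace ℝ (Fin n) →L[ℝ] EuclideanSpace ℝ (Fin n)) =
      ContinuousLinearMap.id ℝ _ - fderiv ℝ (fun q => f (q, t)) (s t)) :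
    ∀ t, (τ • s' t = -s t + f (s t, t) + τ • deriv (fun r => f (s r, r)) t)
      ↔ (τ • s' t = (B t).symm
          (-s t + f (s t, t) + τ • (fderiv ℝ (fun r => f (s t, r)) t) 1)) := by
  intro t
  have hfd : HasFDerivAt f (fderiv ℝ f (s t, t)) (s t, t) :=
    ((hf.differentiable one_ne_zero) (s t, t)).hasFDerivAt
  set D := fderiv ℝ f (s t, t) with hD
  -- derivative of r ↦ (s r, r)
  have hcurve : HasDerivAt (fun r => (s r, r)) (s' t, 1) t :=
    HasDerivAt.prodMk (hs t) (hasDerivAt_id t)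
  have hcomp := HasFDerivAt.comp_hasDerivAt (f := fun r => (s r, r)) (x := t) hfd hcurve
  have hderiv : deriv (fun r => f (s r, r)) t = D (s' t, 1) := hcomp.deriv
  -- partial derivative in q
  have hq : HasFDerivAt (fun q : EuclideanSpace ℝ (Fin n) => f (q, t))
      (D.comp (ContinuousLinearMap.inl ℝ (EuclideanSpace ℝ (Fin n)) ℝ)) (s t) := by
    have h1 : HasFDerivAt (fun q : EuclideanSpace ℝ (Fin n) => (q, t))
        (ContinuousLinearMap.inl ℝ (EuclideanSpace ℝ (Fin n)) ℝ) (s t) :=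
      HasFDerivAt.prodMk (hasFDerivAt_id (s t)) (hasFDerivAt_const t (s t))
    exact hfd.comp (s t) h1
  have hqfd : fderiv ℝ (fun q : EuclideanSpace ℝ (Fin n) => f (q, t)) (s t)
      = D.comp (ContinuousLinearMap.inl ℝ (EuclideanSpace ℝ (Fin n)) ℝ) := hq.fderiv
  -- partial derivative in r
  have hr : HasFDerivAt (fun r : ℝ => f (s t, r))
      (D.comp (ContinuousLinearMap.inr ℝ (EuclideanSpace ℝ (Fin n)) ℝ)) t := by
    have h1 : HasFDerivAt (fun r : ℝ => ((s t : EuclideanSpace ℝ (Fin n)), r))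
        (ContinuousLinearMap.inr ℝ (EuclideanSpace ℝ (Fin n)) ℝ) t :=
      HasFDerivAt.prodMk (hasFDerivAt_const (s t) t) (hasFDerivAt_id t)
    exact hfd.comp t h1
  have hrfd : fderiv ℝ (fun r : ℝ => f (s t, r)) t
      = D.comp (ContinuousLinearMap.inr ℝ (EuclideanSpace ℝ (Fin n)) ℝ) := hr.fderiv
  set A : EuclideanSpace ℝ (Fin n) →L[ℝ] EuclideanSpace ℝ (Fin n) :=
    D.comp (ContinuousLinearMap.inl ℝ (EuclideanSpace ℝ (Fin n)) ℝ) with hA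
  have hsplit : D (s' t, 1) = A (s' t) + D.comp (ContinuousLinearMap.inr ℝ _ ℝ) 1 := by
    simp [hA, ContinuousLinearMap.comp_apply]
    rw [← map_add]
    norm_num
  set v : EuclideanSpace ℝ (Fin n) := D.comp (ContinuousLinearMap.inr ℝ _ ℝ) 1 with hv
  set C : EuclideanSpace ℝ (Fin n) := -s t + f (s t, t) with hC
  rw [hderiv, hrfd, hsplit]
  rw [ContinuousLinearEquiv.eq_symm_apply]
  have hBt : ∀ x, (B t) x = x - A x := by
    intro x
    have := hB t
    rw [hqfd] at this
    have := congrArg (fun L => L x) this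
    simpa using this
  rw [hBt]
  constructor
  · intro h
    rw [A.map_smul]
    rw [smul_add] at h
    rw [h]
    abel
  · intro h
    rw [A.map_smul] at h
    rw [smul_add]
    have heq : τ • s' t = (τ • s' t - τ • A (s' t)) + τ • A (s' t) := by abel
    rw [heq, h]
    abel
end

section
/- Let w < 1 be real and consider the scalar leaky dynamics τ·u'(t) = −u(t) + w·u(t) + x(t) where x(t) = sin(ωt). The target trajectory is u*(t) = sin(ωt)/(1−w), and the asymptotic tracking error of the leaky dynamics satisfies limsup_{t→∞} |u(t) − u*(t)| ≤ ω·τ/(1−w)², consistent with the bound γτ/μ with γ = ω/(1−w) and μ = 1−w. -/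
open Filter Real

theorem scalar_leaky_tracking_example (τ w ω : ℝ) (hτ : 0 < τ) (hw : w < 1) (hω : 0 ≤ ω)
    (u u' : ℝ → ℝ) (hu : ∀ t, HasDerivAt u (u' t) t)
    (hode : ∀ t, τ * u' t = -u t + w * u t + Real.sin (ω * t)) :
    -- the target trajectory u*(t) = sin(ωt)/(1-w) satisfies u* = w·u* + sin(ωt)
    (∀ t, Real.sin (ω * t) / (1 - w) = w * (Real.sin (ω * t) / (1 - w)) + Real.sin (ω * t)) ∧
    -- asymptotic tracking error bound γτ/μ with γ = ω/(1-w), μ = 1-w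
    limsup (fun t => |u t - Real.sin (ω * t) / (1 - w)|) atTop ≤ ω * τ / (1 - w) ^ 2 := by
  have hμ : (0:ℝ) < 1 - w := by linarith
  constructor
  · intro t
    field_simp
    ring
  set μ := 1 - w with hμdef
  set k := μ / τ with hk
  have hk0 : 0 < k := div_pos hμ hτ
  set C := ω * τ / μ ^ 2 with hC
  have hC0 : 0 ≤ C := by positivity
  set v : ℝ → ℝ := fun t => Real.exp (k * t) * (u t - Real.sin (ω * t) / μ) with hvdef
  have hCk : C * k = ω / μ := by
    rw [hC, hk]
    field_simp
  have hexp : ∀ t : ℝ, HasDerivAt (fun s => Real.exp (k * s)) (Real.exp (k * t) * k) t := by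
    intro t
    have hlin : HasDerivAt (fun s : ℝ => k * s) k t := by
      simpa using (hasDerivAt_id t).const_mul k
    exact (Real.hasDerivAt_exp (k * t)).comp t hlin
  have hv : ∀ t, HasDerivAt v (Real.exp (k * t) * (-(ω / μ) * Real.cos (ω * t))) t := by
    intro t
    have hlin2 : HasDerivAt (fun s : ℝ => ω * s) ω t := by
      simpa using (hasDerivAt_id t).const_mul ω
    have hsin : HasDerivAt (fun s => Real.sin (ω * s)) (Real.cos (ω * t) * ω) t :=
      (Real.hasDerivAt_sin (ω * t)).comp t hlin2
    have he : HasDerivAt (fun s => u s - Real.sin (ω * s) / μ)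
        (u' t - Real.cos (ω * t) * ω / μ) t := (hu t).sub (hsin.div_const μ)
    have hmul := (hexp t).mul he
    refine hmul.congr_deriv ?_
    have hode' : u' t = (-(μ * u t) + Real.sin (ω * t)) / τ := by
      rw [eq_div_iff hτ.ne']
      rw [hμdef]
      linarith [hode t]
    rw [hode', hk, hμdef]
    have hw' : (1:ℝ) - w ≠ 0 := by linarith
    field_simp
    ring
  -- G = v + C exp(k t) is monotone, H = v - C exp(k t) is antitone
  have hGd : ∀ t, HasDerivAt (fun t => v t + C * Real.exp (k * t))
      (Real.exp (k * t) * (-(ω / μ) * Real.cos (ω * t)) + C * (Real.exp (k * t) * k)) t :=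
    fun t => (hv t).add ((hexp t).const_mul C)
  have hHd : ∀ t, HasDerivAt (fun t => v t - C * Real.exp (k * t))
      (Real.exp (k * t) * (-(ω / μ) * Real.cos (ω * t)) - C * (Real.exp (k * t) * k)) t :=
    fun t => (hv t).sub ((hexp t).const_mul C)
  have hG : Monotone (fun t => v t + C * Real.exp (k * t)) := by
    apply monotone_of_deriv_nonneg (fun t => (hGd t).differentiableAt)
    intro t
    rw [(hGd t).deriv]
    have hkey : Real.exp (k * t) * (-(ω / μ) * Real.cos (ω * t)) + C * (Real.exp (k * t) * k)
        = Real.exp (k * t) * ((ω / μ) * (1 - Real.cos (ω * t))) := by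
      linear_combination Real.exp (k * t) * hCk
    rw [hkey]
    have h1 : Real.cos (ω * t) ≤ 1 := Real.cos_le_one _
    exact mul_nonneg (Real.exp_pos _).le
      (mul_nonneg (by positivity) (by linarith))
  have hH : Antitone (fun t => v t - C * Real.exp (k * t)) := by
    apply antitone_of_deriv_nonpos (fun t => (hHd t).differentiableAt)
    intro t
    rw [(hHd t).deriv]
    have hkey : Real.exp (k * t) * (-(ω / μ) * Real.cos (ω * t)) - C * (Real.exp (k * t) * k)
        = -(Real.exp (k * t) * ((ω / μ) * (1 + Real.cos (ω * t)))) := by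
      linear_combination (-Real.exp (k * t)) * hCk
    rw [hkey]
    have h1 : -1 ≤ Real.cos (ω * t) := Real.neg_one_le_cos _
    simp only [neg_nonpos]
    exact mul_nonneg (Real.exp_pos _).le
      (mul_nonneg (by positivity) (by linarith))
  -- pointwise bound for t ≥ 0
  have hbound : ∀ t ≥ (0:ℝ), |u t - Real.sin (ω * t) / μ| ≤ C + |v 0| * Real.exp (-(k * t)) := by
    intro t ht
    have hE : Real.exp (k * t) * Real.exp (-(k * t)) = 1 := by
      rw [← Real.exp_add]; simp
    have hGm := hG ht
    have hHm := hH ht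
    simp only [mul_zero, Real.exp_zero, mul_one] at hGm hHm
    have hexp1 : (1:ℝ) ≤ Real.exp (k * t) := by
      rw [show (1:ℝ) = Real.exp 0 by simp]
      exact Real.exp_le_exp.mpr (by positivity)
    have h2 : v t ≤ |v 0| + C * Real.exp (k * t) - C := by
      have := le_abs_self (v 0); linarith
    have h3 : -(|v 0| + C * Real.exp (k * t) - C) ≤ v t := by
      have := neg_abs_le (v 0); nlinarith
    have habs : |v t| ≤ |v 0| + C * Real.exp (k * t) - C := abs_le.mpr ⟨h3, h2⟩
    have hvt : |u t - Real.sin (ω * t) / μ| = |v t| * Real.exp (-(k * t)) := by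
      rw [hvdef]
      rw [abs_mul, Real.abs_exp]
      have : Real.exp (k * t) * |u t - Real.sin (ω * t) / μ| * Real.exp (-(k * t))
          = (Real.exp (k * t) * Real.exp (-(k * t))) * |u t - Real.sin (ω * t) / μ| := by ring
      rw [this, hE, one_mul]
    rw [hvt]
    have hEpos : (0:ℝ) ≤ Real.exp (-(k * t)) := (Real.exp_pos _).le
    calc |v t| * Real.exp (-(k * t))
        ≤ (|v 0| + C * Real.exp (k * t) - C) * Real.exp (-(k * t)) :=
          mul_le_mul_of_nonneg_right habs hEpos
      _ = |v 0| * Real.exp (-(k * t)) + C * (Real.exp (k * t) * Real.exp (-(k * t)))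
            - C * Real.exp (-(k * t)) := by ring
      _ = |v 0| * Real.exp (-(k * t)) + C - C * Real.exp (-(k * t)) := by rw [hE, mul_one]
      _ ≤ C + |v 0| * Real.exp (-(k * t)) := by nlinarith
  -- limsup argument
  have h1 : Tendsto (fun t : ℝ => k * t) atTop atTop := tendsto_id.const_mul_atTop hk0
  have h2 : Tendsto (fun t : ℝ => Real.exp (-(k * t))) atTop (nhds 0) :=
    Real.tendsto_exp_atBot.comp (tendsto_neg_atTop_atBot.comp h1)
  have hb : Tendsto (fun t : ℝ => C + |v 0| * Real.exp (-(k * t))) atTop (nhds C) := by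
    have := tendsto_const_nhds (α := ℝ) (x := C) (f := atTop (α := ℝ)) |>.add
      ((tendsto_const_nhds (x := |v 0|)).mul h2)
    simpa using this
  have hle : (fun t => |u t - Real.sin (ω * t) / μ|) ≤ᶠ[atTop]
      fun t => C + |v 0| * Real.exp (-(k * t)) :=
    eventually_atTop.mpr ⟨0, hbound⟩
  calc limsup (fun t => |u t - Real.sin (ω * t) / μ|) atTop
      ≤ limsup (fun t : ℝ => C + |v 0| * Real.exp (-(k * t))) atTop := by
        refine limsup_le_limsup hle ?_ ?_
        · exact IsBoundedUnder.isCoboundedUnder_le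
            ⟨0, eventually_map.mpr (Eventually.of_forall fun t => abs_nonneg _)⟩
        · exact hb.isBoundedUnder_le
    _ = C := hb.limsup_eq
end
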